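/- Contact analysis lemma, case α ∈ (0,1) (Lemma 3.1). Let d ≥ 1, α ∈ (0,1), m > 1, δ ≥ 0. Let u : [0,∞) × ℝ^d → [0,∞) be bounded, C¹ in t and C² in x, such that for v(t,·) := u(t,·)^{m−1} the integrals G₀(v(t,·))(x) and L(v(t,·))(x) converge absolutely at every point, and such that u satisfies pointwise ∂_t u = ∇_x u · G₀(v) + u L(v) + δ Δ_x u on (0,∞) × ℝ^d, where G₀(w)(x) = ∫_{ℝ^d} w(x+z) z ‖z‖^{−(d+α)} dz. Let U : (0,∞) × ℝ^d → [0,∞) be radially symmetric in x and non-increasing in ‖x‖, C² in (t,x) on (0,∞) × {x : ‖x‖ > 1}, and such that for V(t,·) := U(t,·)^{m−1} the integrals G₀(V(t_c,·))(x_c) and L(V(t_c,·))(x_c) below converge absolutely. Suppose u ≤ U on (0,t_c] × ℝ^d and u(t_c,x_c) = U(t_c,x_c) for some t_c > 0 and x_c with ‖x_c‖ > 1, and let γ > 0 satisfy γ ‖∇_x U(t_c,x_c)‖ ≤ U(t_c,x_c). Then at the point (t_c,x_c): ∂_t U ≤ ∇_x U · G₀(V) + U L(V) + δ Δ_x U +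 e, where, writing x̂_c = x_c/‖x_c‖ and I⁺_out(w) = ∫_{‖y‖ ≥ γ, y·x̂_c ≥ 0} w(x_c+y) (y·x̂_c) ‖y‖^{−(d+α)} dy, the error term is e = ‖∇_x U(t_c,x_c)‖ ( I⁺_out(V(t_c,·)) − I⁺_out(v(t_c,·)) ); moreover e ≥ 0. -/

import Mathlib

open MeasureTheory Metric Set

/-- The (unnormalized) singular integral `G₀(w)(x) = ∫ w(x+z) z ‖z‖^{−(d+α)} dz`,
representing `∇(−Δ)^{α/2−1} w` up to a positive constant (form valid for `α ∈ (0,1)`). -/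
noncomputable def fracGrad0 (d : ℕ) (α : ℝ) (w : EuclideanSpace ℝ (Fin d) → ℝ)
    (x : EuclideanSpace ℝ (Fin d)) : EuclideanSpace ℝ (Fin d) :=
  ∫ z, (w (x + z) * ‖z‖ ^ (-((d : ℝ) + α))) • z

/-- The (unnormalized) singular integral
`L(w)(x) = ∫ (w(x+z) + w(x−z) − 2 w(x)) ‖z‖^{−(d+α)} dz`,
representing `−(−Δ)^{α/2} w` up to a positive constant. -/
noncomputable def fracLap (d : ℕ) (α : ℝ) (w : EuclideanSpace ℝ (Fin d) → ℝ)
    (x : EuclideanSpace ℝ (Fin d)) : ℝ :=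
  ∫ z, (w (x + z) + w (x - z) - 2 * w x) * ‖z‖ ^ (-((d : ℝ) + α))

/-- The Laplacian of `f` at `x`: the trace of the second derivative of `f` at `x`,
computed in the standard orthonormal basis of `EuclideanSpace ℝ (Fin d)`. -/
noncomputable def lap (d : ℕ) (f : EuclideanSpace ℝ (Fin d) → ℝ)
    (x : EuclideanSpace ℝ (Fin d)) : ℝ :=
  ∑ i : Fin d, fderiv ℝ (fun y => fderiv ℝ f y (EuclideanSpace.single i 1)) x
    (EuclideanSpace.single i 1)

/-- The outer positive-half drift integral
`I⁺_out(w) = ∫_{‖y‖ ≥ γ, y·x̂_c ≥ 0} w(x_c+y) (y·x̂_c) ‖y‖^{−(d+α)} dy`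
(form valid for `α ∈ (0,1)`), where `x̂_c = x_c/‖x_c‖`. -/
noncomputable def IoutPlus0 (d : ℕ) (α γ : ℝ) (xc : EuclideanSpace ℝ (Fin d))
    (w : EuclideanSpace ℝ (Fin d) → ℝ) : ℝ :=
  ∫ y in {y : EuclideanSpace ℝ (Fin d) |
      γ ≤ ‖y‖ ∧ 0 ≤ (inner ℝ y (‖xc‖⁻¹ • xc) : ℝ)},
    w (xc + y) * (inner ℝ y (‖xc‖⁻¹ • xc) : ℝ) * ‖y‖ ^ (-((d : ℝ) + α))

open Filter Topology
open scoped InnerProductSpace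

/-!
At the contact point `U - u` has a minimum over `(0, t_c] × ℝ^d`, so `∂_t U ≤ ∂_t u`, `∇U = ∇u`
and `ΔU ≥ Δu`, which settles the local terms of the equation for `u`. Since `U(t_c, ·)` is radially
non-increasing, `∇U = -‖∇U‖ x̂_c`. Put `g(z) = V(x_c + z) - v(x_c + z) ≥ 0`; as `v = V` at `x_c`,
the `U L` terms differ by `U(t_c,x_c) ∫ (g(z) + g(-z)) ‖z‖^{-(d+α)} dz` and the drift terms by
`-‖∇U‖ ∫ g(z) ⟨z, x̂_c⟩ ‖z‖^{-(d+α)} dz`. The drift density `‖∇U‖ ⟨z, x̂_c⟩` is at most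
`U(t_c,x_c)` outside the outer positive half-space `{‖z‖ ≥ γ, ⟨z, x̂_c⟩ ≥ 0}`: behind `x_c` it is
nonpositive, and inside the ball of radius `γ` it is bounded by `γ ‖∇U‖ ≤ U(t_c,x_c)`. The drift
over the outer positive half-space is what remains, and it is the error term `e ≥ 0`.
-/

theorem IsLocalMinOn.hasDerivAt_nonpos_of_Iic {f : ℝ → ℝ} {a f' : ℝ}
    (h : IsLocalMinOn f (Iic a) a) (hf : HasDerivAt f f' a) : f' ≤ 0 := by
  have hcone : (-1 : ℝ) ∈ posTangentConeAt (Iic a) a :=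
    mem_posTangentConeAt_of_segment_subset <| by
      rw [segment_symm, segment_eq_Icc (by linarith)]
      exact fun _ h => h.2
  simpa using h.hasFDerivWithinAt_nonneg hf.hasFDerivAt.hasFDerivWithinAt hcone

theorem IsLocalMaxOn.hasDerivAt_nonpos_of_Ici {f : ℝ → ℝ} {a f' : ℝ}
    (h : IsLocalMaxOn f (Ici a) a) (hf : HasDerivAt f f' a) : f' ≤ 0 := by
  have hcone : (1 : ℝ) ∈ posTangentConeAt (Ici a) a :=
    mem_posTangentConeAt_of_segment_subset <| by
      rw [segment_eq_Icc (by linarith)]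
      exact fun _ h => h.1
  simpa using h.hasFDerivWithinAt_nonpos hf.hasFDerivAt.hasFDerivWithinAt hcone

-- A negative second derivative would make `a` also a local maximum (second-derivative test),
-- so `f` would be locally constant.
theorem IsLocalMin.deriv_deriv_nonneg {f : ℝ → ℝ} {a : ℝ} (h : IsLocalMin f a)
    (hc : ContinuousAt f a) : 0 ≤ deriv (deriv f) a := by
  by_contra! hneg
  have hconst : f =ᶠ[𝓝 a] fun _ => f a :=
    (h.and (isLocalMax_of_deriv_deriv_neg hneg h.deriv_eq_zero hc)).mono
      fun _ ht => le_antisymm ht.2 ht.1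
  rw [hconst.deriv.deriv_eq] at hneg
  simp at hneg

section SecondOrder

variable {E : Type*} [NormedAddCommGroup E] [NormedSpace ℝ E] {f : E → ℝ} {x : E}

theorem ContDiffAt.differentiableAt_fderiv_apply (hf : ContDiffAt ℝ 2 f x) (v : E) :
    DifferentiableAt ℝ (fun y => fderiv ℝ f y v) x :=
  ((hf.fderiv_right (m := 1) le_rfl).clm_apply contDiffAt_const).differentiableAt one_ne_zero

theorem IsLocalMin.fderiv_fderiv_apply_self_nonneg (h : IsLocalMin f x) (hf : ContDiffAt ℝ 2 f x)
    (v : E) : 0 ≤ fderiv ℝ (fun y => fderiv ℝ f y v) x v := by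
  have hline : ∀ t : ℝ, HasDerivAt (fun s : ℝ => x + s • v) v t := fun t => by
    simpa using ((hasDerivAt_id t).smul_const v).const_add x
  have hline0 : x = x + (0 : ℝ) • v := by simp
  have hline_tendsto : Tendsto (fun s : ℝ => x + s • v) (𝓝 0) (𝓝 x) := by
    simpa using (hline 0).continuousAt.tendsto
  have hderiv : deriv (fun s : ℝ => f (x + s • v)) =ᶠ[𝓝 0] fun t => fderiv ℝ f (x + t • v) v := by
    filter_upwards [hline_tendsto.eventually (hf.eventually (by simp))] with t ht
    exact ((ht.differentiableAt two_ne_zero).hasFDerivAt.comp_hasDerivAt t (hline t)).deriv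
  have hderiv2 : HasDerivAt (fun t : ℝ => fderiv ℝ f (x + t • v) v)
      (fderiv ℝ (fun y => fderiv ℝ f y v) x v) 0 :=
    (hf.differentiableAt_fderiv_apply v).hasFDerivAt.comp_hasDerivAt_of_eq 0 (hline 0) hline0
  have hmin : IsLocalMin (fun s : ℝ => f (x + s • v)) 0 :=
    IsLocalMin.comp_continuous (g := fun s : ℝ => x + s • v) (by simpa using h)
      (hline 0).continuousAt
  have hcont : ContinuousAt (fun s : ℝ => f (x + s • v)) 0 :=
    hf.continuousAt.comp_of_eq (hline 0).continuousAt hline0.symm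
  simpa [hderiv.deriv_eq, hderiv2.deriv] using hmin.deriv_deriv_nonneg hcont

end SecondOrder

theorem lap_le_lap_of_isLocalMin_sub {d : ℕ} {f g : EuclideanSpace ℝ (Fin d) → ℝ}
    {x : EuclideanSpace ℝ (Fin d)} (hf : ContDiffAt ℝ 2 f x) (hg : ContDiffAt ℝ 2 g x)
    (h : IsLocalMin (g - f) x) : lap d f x ≤ lap d g x := by
  refine Finset.sum_le_sum fun i _ => ?_
  set e := EuclideanSpace.single i (1 : ℝ)
  have hsplit : (fun y => fderiv ℝ (g - f) y e) =ᶠ[𝓝 x]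
      fun y => fderiv ℝ g y e - fderiv ℝ f y e := by
    filter_upwards [hf.eventually (by simp), hg.eventually (by simp)] with y hfy hgy
    rw [fderiv_sub (hgy.differentiableAt two_ne_zero) (hfy.differentiableAt two_ne_zero)]
    rfl
  have hnonneg := h.fderiv_fderiv_apply_self_nonneg (hg.sub hf) e
  rw [hsplit.fderiv_eq, fderiv_fun_sub (hg.differentiableAt_fderiv_apply e)
    (hf.differentiableAt_fderiv_apply e)] at hnonneg
  simpa using hnonneg

theorem gradient_eq_of_isLocalMin_sub {F : Type*} [NormedAddCommGroup F] [InnerProductSpace ℝ F]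
    [CompleteSpace F] {f g : F → ℝ} {x : F} (hf : DifferentiableAt ℝ f x)
    (hg : DifferentiableAt ℝ g x) (h : IsLocalMin (g - f) x) : gradient f x = gradient g x := by
  have hzero := h.fderiv_eq_zero
  rw [fderiv_sub hg hf, sub_eq_zero] at hzero
  rw [gradient, gradient, hzero]

section Radial

variable {F : Type*} [NormedAddCommGroup F] [InnerProductSpace ℝ F]

theorem hasFDerivAt_norm_of_ne_zero {x : F} (hx : x ≠ 0) :
    HasFDerivAt (‖·‖) (‖x‖⁻¹ • innerSL ℝ x) x := by
  have h := (hasStrictFDerivAt_norm_sq x).hasFDerivAt.sqrt (by positivity)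
  simp only [Real.sqrt_sq (norm_nonneg _)] at h
  convert h using 1
  ext w
  simp only [smul_apply, coe_innerSL_apply, smul_eq_mul, one_div, mul_inv_rev,
    nsmul_eq_mul, Nat.cast_ofNat]
  field_simp

theorem gradient_eq_neg_norm_smul_of_radially_antitone [CompleteSpace F] {f : F → ℝ} {x : F}
    (hf : ∀ y z, ‖y‖ ≤ ‖z‖ → f z ≤ f y) (hx : x ≠ 0) (hd : DifferentiableAt ℝ f x) :
    gradient f x = -‖gradient f x‖ • (‖x‖⁻¹ • x) := by
  set e := ‖x‖⁻¹ • x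
  have he : ‖e‖ = 1 := by
    rw [norm_smul, norm_inv, norm_norm, inv_mul_cancel₀ (norm_ne_zero_iff.2 hx)]
  have hnorm : ∀ r : ℝ, 0 ≤ r → ‖r • e‖ = r := fun r hr => by
    rw [norm_smul, he, mul_one, Real.norm_of_nonneg hr]
  have hradial : ∀ y, f (‖y‖ • e) = f y := fun y =>
    le_antisymm (hf _ _ (hnorm _ (norm_nonneg y)).ge) (hf _ _ (hnorm _ (norm_nonneg y)).le)
  have hxe : ‖x‖ • e = x := smul_inv_smul₀ (norm_ne_zero_iff.2 hx) x
  have hline : HasDerivAt (fun r : ℝ => f (r • e)) (fderiv ℝ f x e) ‖x‖ :=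
    hd.hasFDerivAt.comp_hasDerivAt_of_eq ‖x‖ (by simpa using (hasDerivAt_id ‖x‖).smul_const e)
      hxe.symm
  have hc : fderiv ℝ f x e ≤ 0 := by
    refine IsLocalMaxOn.hasDerivAt_nonpos_of_Ici (eventually_nhdsWithin_of_forall fun r hr => ?_)
      hline
    rw [hxe]
    exact hf _ _ (by rw [hnorm r ((norm_nonneg x).trans hr)]; exact hr)
  have hgrad : gradient f x = fderiv ℝ f x e • e := by
    refine HasGradientAt.gradient ((hasGradientAt_iff_hasFDerivAt).2 ?_)
    have h := hline.comp_hasFDerivAt x (hasFDerivAt_norm_of_ne_zero hx)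
    simp only [Function.comp_def, hradial] at h
    refine h.congr_fderiv (ContinuousLinearMap.ext fun w => ?_)
    simp [e]
  rw [hgrad, norm_smul, he, mul_one, Real.norm_of_nonpos hc, neg_neg]

end Radial

section HalfSpace

variable {F : Type*} [NormedAddCommGroup F] [InnerProductSpace ℝ F]

def outerHalfSpace (γ : ℝ) (e : F) : Set F := {y | γ ≤ ‖y‖ ∧ 0 ≤ ⟪y, e⟫_ℝ}

theorem measurableSet_outerHalfSpace [MeasurableSpace F] [OpensMeasurableSpace F] (γ : ℝ)
    (e : F) : MeasurableSet (outerHalfSpace γ e) := by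
  change MeasurableSet ({y : F | γ ≤ ‖y‖} ∩ {y | 0 ≤ ⟪y, e⟫_ℝ})
  exact ((isClosed_le continuous_const continuous_norm).inter
    (isClosed_le continuous_const (by fun_prop))).measurableSet

variable {γ P c : ℝ} {e : F}

theorem mul_inner_le_add_indicator_outerHalfSpace (he : ‖e‖ ≤ 1) (hP : 0 ≤ P) (hc : 0 ≤ c)
    (hγ : γ * P ≤ c) {g k : F → ℝ} {b : ℝ} {z : F} (hg : 0 ≤ g z) (hb : 0 ≤ b) (hk : 0 ≤ k z) :
    P * (g z * ⟪z, e⟫_ℝ * k z)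
      ≤ c * ((g z + b) * k z)
        + (outerHalfSpace γ e).indicator (fun y => P * (g y * ⟪y, e⟫_ℝ * k y)) z := by
  have hgk : 0 ≤ g z * k z := mul_nonneg hg hk
  have hsym : 0 ≤ c * ((g z + b) * k z) := mul_nonneg hc (mul_nonneg (add_nonneg hg hb) hk)
  by_cases hz : z ∈ outerHalfSpace γ e
  · rw [indicator_of_mem hz]
    exact le_add_of_nonneg_left hsym
  · have hPc : P * ⟪z, e⟫_ℝ ≤ c := by
      rcases lt_or_ge ⟪z, e⟫_ℝ 0 with hneg | hnonneg
      · exact (mul_nonpos_of_nonneg_of_nonpos hP hneg.le).trans hc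
      · have hzγ : ‖z‖ < γ := lt_of_not_ge fun h => hz ⟨h, hnonneg⟩
        have hze : ⟪z, e⟫_ℝ ≤ ‖z‖ :=
          (real_inner_le_norm z e).trans (mul_le_of_le_one_right (norm_nonneg z) he)
        nlinarith
    rw [indicator_of_notMem hz, add_zero]
    calc P * (g z * ⟪z, e⟫_ℝ * k z) = P * ⟪z, e⟫_ℝ * (g z * k z) := by ring
      _ ≤ c * (g z * k z) := mul_le_mul_of_nonneg_right hPc hgk
      _ ≤ c * ((g z + b) * k z) :=
        mul_le_mul_of_nonneg_left (mul_le_mul_of_nonneg_right (le_add_of_nonneg_right hb) hk) hc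

theorem integral_mul_inner_le_add_setIntegral [MeasurableSpace F] [OpensMeasurableSpace F]
    {μ : Measure F} (he : ‖e‖ ≤ 1) (hP : 0 ≤ P) (hc : 0 ≤ c) (hγ : γ * P ≤ c) {g g' k : F → ℝ}
    (hg : ∀ z, 0 ≤ g z) (hg' : ∀ z, 0 ≤ g' z) (hk : ∀ z, 0 ≤ k z)
    (hdrift : Integrable (fun z => g z * ⟪z, e⟫_ℝ * k z) μ)
    (hsym : Integrable (fun z => (g z + g' z) * k z) μ) :
    P * ∫ z, g z * ⟪z, e⟫_ℝ * k z ∂μ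
      ≤ c * ∫ z, (g z + g' z) * k z ∂μ
        + P * ∫ z in outerHalfSpace γ e, g z * ⟪z, e⟫_ℝ * k z ∂μ := by
  have hA := measurableSet_outerHalfSpace (F := F) γ e
  have hind := (hdrift.const_mul P).indicator hA
  rw [← integral_const_mul, ← integral_const_mul, ← integral_const_mul, ← integral_indicator hA,
    ← integral_add (hsym.const_mul c) hind]
  exact integral_mono (hdrift.const_mul P) ((hsym.const_mul c).add hind) fun z => mul_inner_le_add_indicator_outerHalfSpace he hP hc hγ (hg z) (hg' z) (hk z)

end HalfSpace

section FractionalOperators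

variable {d : ℕ} {α : ℝ} {x : EuclideanSpace ℝ (Fin d)} {v w : EuclideanSpace ℝ (Fin d) → ℝ}

theorem MeasureTheory.Integrable.mul_inner_mul_of_smul {F : Type*} [NormedAddCommGroup F]
    [InnerProductSpace ℝ F] [MeasurableSpace F] {μ : Measure F} {φ ψ : F → ℝ}
    (h : Integrable (fun z => (φ z * ψ z) • z) μ) (e : F) :
    Integrable (fun z => φ z * ⟪z, e⟫_ℝ * ψ z) μ :=
  (h.inner_const e).congr (Eventually.of_forall fun z => by
    simp only [real_inner_smul_left]
    ring)

theorem inner_fracGrad0_sub_inner_fracGrad0 (e : EuclideanSpace ℝ (Fin d))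
    (hv : Integrable fun z => (v (x + z) * ‖z‖ ^ (-((d : ℝ) + α))) • z)
    (hw : Integrable fun z => (w (x + z) * ‖z‖ ^ (-((d : ℝ) + α))) • z) :
    ⟪fracGrad0 d α w x, e⟫_ℝ - ⟪fracGrad0 d α v x, e⟫_ℝ
      = ∫ z, (w (x + z) - v (x + z)) * ⟪z, e⟫_ℝ * ‖z‖ ^ (-((d : ℝ) + α)) := by
  have hsub : Integrable fun z => (w (x + z) * ‖z‖ ^ (-((d : ℝ) + α))) • z
      - (v (x + z) * ‖z‖ ^ (-((d : ℝ) + α))) • z := hw.sub hv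
  rw [← inner_sub_left, fracGrad0, fracGrad0, ← integral_sub hw hv, real_inner_comm,
    ← integral_inner hsub]
  congr 1
  ext z
  simp only [← sub_smul, real_inner_smul_right, real_inner_comm e]
  ring

theorem fracLap_sub_fracLap (hx : v x = w x)
    (hv : Integrable fun z =>
      (v (x + z) + v (x - z) - 2 * v x) * ‖z‖ ^ (-((d : ℝ) + α)))
    (hw : Integrable fun z =>
      (w (x + z) + w (x - z) - 2 * w x) * ‖z‖ ^ (-((d : ℝ) + α))) :
    fracLap d α w x - fracLap d α v x
      = ∫ z, (w (x + z) - v (x + z) + (w (x - z) - v (x - z))) * ‖z‖ ^ (-((d : ℝ) + α)) := by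
  rw [fracLap, fracLap, ← integral_sub hw hv]
  congr 1
  ext z
  rw [hx]
  ring

theorem IoutPlus0_sub_IoutPlus0 (γ : ℝ)
    (hv : Integrable fun z => (v (x + z) * ‖z‖ ^ (-((d : ℝ) + α))) • z)
    (hw : Integrable fun z => (w (x + z) * ‖z‖ ^ (-((d : ℝ) + α))) • z) :
    IoutPlus0 d α γ x w - IoutPlus0 d α γ x v
      = ∫ z in outerHalfSpace γ (‖x‖⁻¹ • x),
          (w (x + z) - v (x + z)) * ⟪z, ‖x‖⁻¹ • x⟫_ℝ * ‖z‖ ^ (-((d : ℝ) + α)) := by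
  rw [IoutPlus0, IoutPlus0, ← integral_sub (hw.mul_inner_mul_of_smul _).integrableOn
    (hv.mul_inner_mul_of_smul _).integrableOn]
  congr 1
  ext z
  ring

theorem IoutPlus0_mono (γ : ℝ) (hvw : ∀ y, v y ≤ w y)
    (hv : Integrable fun z => (v (x + z) * ‖z‖ ^ (-((d : ℝ) + α))) • z)
    (hw : Integrable fun z => (w (x + z) * ‖z‖ ^ (-((d : ℝ) + α))) • z) :
    IoutPlus0 d α γ x v ≤ IoutPlus0 d α γ x w := by
  rw [← sub_nonneg, IoutPlus0_sub_IoutPlus0 γ hv hw]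
  refine setIntegral_nonneg (measurableSet_outerHalfSpace _ _) fun z hz => ?_
  exact mul_nonneg (mul_nonneg (sub_nonneg.2 (hvw _)) hz.2) (by positivity)

theorem inner_fracGrad0_add_mul_fracLap_le {γ P c : ℝ} {p : EuclideanSpace ℝ (Fin d)}
    (hp : p = -P • (‖x‖⁻¹ • x)) (hP : 0 ≤ P) (hc : 0 ≤ c) (hγ : γ * P ≤ c)
    (hvw : ∀ y, v y ≤ w y) (hx : v x = w x)
    (hvG : Integrable fun z => (v (x + z) * ‖z‖ ^ (-((d : ℝ) + α))) • z)
    (hwG : Integrable fun z => (w (x + z) * ‖z‖ ^ (-((d : ℝ) + α))) • z)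
    (hvL : Integrable fun z =>
      (v (x + z) + v (x - z) - 2 * v x) * ‖z‖ ^ (-((d : ℝ) + α)))
    (hwL : Integrable fun z =>
      (w (x + z) + w (x - z) - 2 * w x) * ‖z‖ ^ (-((d : ℝ) + α))) :
    ⟪p, fracGrad0 d α v x⟫_ℝ + c * fracLap d α v x
      ≤ ⟪p, fracGrad0 d α w x⟫_ℝ + c * fracLap d α w x
        + P * (IoutPlus0 d α γ x w - IoutPlus0 d α γ x v) := by
  subst hp
  set e := ‖x‖⁻¹ • x
  have he : ‖e‖ ≤ 1 := by
    rw [norm_smul, norm_inv, norm_norm]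
    exact inv_mul_le_one
  have hdrift : Integrable fun z =>
      (w (x + z) - v (x + z)) * ⟪z, e⟫_ℝ * ‖z‖ ^ (-((d : ℝ) + α)) :=
    ((hwG.mul_inner_mul_of_smul e).sub (hvG.mul_inner_mul_of_smul e)).congr
      (Eventually.of_forall fun z => by simp only [Pi.sub_apply]; ring)
  have hsym : Integrable fun z =>
      (w (x + z) - v (x + z) + (w (x - z) - v (x - z))) * ‖z‖ ^ (-((d : ℝ) + α)) :=
    (hwL.sub hvL).congr (Eventually.of_forall fun z => by simp only [Pi.sub_apply, hx]; ring)
  have key := integral_mul_inner_le_add_setIntegral he hP hc hγ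
    (fun z => sub_nonneg.2 (hvw (x + z))) (fun z => sub_nonneg.2 (hvw (x - z)))
    (fun z => by positivity) hdrift hsym
  rw [← inner_fracGrad0_sub_inner_fracGrad0 e hvG hwG, ← fracLap_sub_fracLap hx hvL hwL,
    ← IoutPlus0_sub_IoutPlus0 γ hvG hwG] at key
  simp only [real_inner_smul_left, real_inner_comm _ e]
  linear_combination key

end FractionalOperators

theorem contact_analysis_alpha_lt_one_general
    (d : ℕ) (α m δ : ℝ) (hm : 1 < m)
    (hδ : 0 ≤ δ)
    (u : ℝ → EuclideanSpace ℝ (Fin d) → ℝ)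
    (hunn : ∀ t x, 0 ≤ u t x)
    (hut : ∀ x, ContDiffOn ℝ 1 (fun t => u t x) (Set.Ici 0))
    (hux : ∀ t : ℝ, 0 ≤ t → ContDiff ℝ 2 (u t))
    (huG : ∀ t : ℝ, 0 ≤ t → ∀ x, Integrable (fun z : EuclideanSpace ℝ (Fin d) =>
      (u t (x + z) ^ (m - 1) * ‖z‖ ^ (-((d : ℝ) + α))) • z))
    (huL : ∀ t : ℝ, 0 ≤ t → ∀ x, Integrable (fun z : EuclideanSpace ℝ (Fin d) =>
      (u t (x + z) ^ (m - 1) + u t (x - z) ^ (m - 1) - 2 * u t x ^ (m - 1))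
        * ‖z‖ ^ (-((d : ℝ) + α))))
    (hueq : ∀ t : ℝ, 0 < t → ∀ x,
      deriv (fun s => u s x) t
        = (inner ℝ (gradient (u t) x) (fracGrad0 d α (fun y => u t y ^ (m - 1)) x) : ℝ)
          + u t x * fracLap d α (fun y => u t y ^ (m - 1)) x
          + δ * lap d (u t) x)
    (U : ℝ → EuclideanSpace ℝ (Fin d) → ℝ)
    (hUnn : ∀ t x, 0 < t → 0 ≤ U t x)
    (hUmono : ∀ t : ℝ, 0 < t → ∀ x y : EuclideanSpace ℝ (Fin d),
      ‖x‖ ≤ ‖y‖ → U t y ≤ U t x)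
    (hUC2 : ContDiffOn ℝ 2 (fun p : ℝ × EuclideanSpace ℝ (Fin d) => U p.1 p.2)
      (Set.Ioi (0 : ℝ) ×ˢ {x : EuclideanSpace ℝ (Fin d) | 1 < ‖x‖}))
    (tc : ℝ) (htc : 0 < tc) (xc : EuclideanSpace ℝ (Fin d)) (hxc : 1 < ‖xc‖)
    (hVG : Integrable (fun z : EuclideanSpace ℝ (Fin d) =>
      (U tc (xc + z) ^ (m - 1) * ‖z‖ ^ (-((d : ℝ) + α))) • z))
    (hVL : Integrable (fun z : EuclideanSpace ℝ (Fin d) =>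
      (U tc (xc + z) ^ (m - 1) + U tc (xc - z) ^ (m - 1) - 2 * U tc xc ^ (m - 1))
        * ‖z‖ ^ (-((d : ℝ) + α))))
    (htouch : ∀ t x, 0 < t → t ≤ tc → u t x ≤ U t x)
    (hcontact : u tc xc = U tc xc)
    (γ : ℝ) (hγle : γ * ‖gradient (U tc) xc‖ ≤ U tc xc) :
    deriv (fun s => U s xc) tc
      ≤ (inner ℝ (gradient (U tc) xc)
            (fracGrad0 d α (fun y => U tc y ^ (m - 1)) xc) : ℝ)
        + U tc xc * fracLap d α (fun y => U tc y ^ (m - 1)) xc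
        + δ * lap d (U tc) xc
        + ‖gradient (U tc) xc‖
          * (IoutPlus0 d α γ xc (fun y => U tc y ^ (m - 1))
             - IoutPlus0 d α γ xc (fun y => u tc y ^ (m - 1))) ∧
    0 ≤ ‖gradient (U tc) xc‖
          * (IoutPlus0 d α γ xc (fun y => U tc y ^ (m - 1))
             - IoutPlus0 d α γ xc (fun y => u tc y ^ (m - 1))) := by
  have hUat : ContDiffAt ℝ 2 (fun p : ℝ × EuclideanSpace ℝ (Fin d) => U p.1 p.2) (tc, xc) :=
    hUC2.contDiffAt (prod_mem_nhds (Ioi_mem_nhds htc)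
      ((isOpen_lt continuous_const continuous_norm).mem_nhds hxc))
  have hUx : ContDiffAt ℝ 2 (U tc) xc := hUat.comp xc (contDiffAt_const.prodMk contDiffAt_id)
  have hux' : ContDiffAt ℝ 2 (u tc) xc := (hux tc htc.le).contDiffAt
  have hmin : IsLocalMin (U tc - u tc) xc := Eventually.of_forall fun y => by
    simpa [hcontact] using htouch tc y htc le_rfl
  have hdt : deriv (fun s => U s xc) tc ≤ deriv (fun s => u s xc) tc := by
    have hUt : DifferentiableAt ℝ (fun s => U s xc) tc :=
      (hUat.comp tc (contDiffAt_id.prodMk contDiffAt_const)).differentiableAt two_ne_zero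
    have hut' : DifferentiableAt ℝ (fun s => u s xc) tc :=
      ((hut xc).contDiffAt (Ici_mem_nhds htc)).differentiableAt one_ne_zero
    have hmin_t : IsLocalMinOn (fun s => U s xc - u s xc) (Iic tc) tc := by
      filter_upwards [nhdsWithin_le_nhds (Ioi_mem_nhds htc), self_mem_nhdsWithin]
        with s hs0 hs
      simpa [hcontact] using htouch s xc hs0 hs
    linarith [hmin_t.hasDerivAt_nonpos_of_Iic (hUt.hasDerivAt.sub hut'.hasDerivAt)]
  have hgrad := gradient_eq_of_isLocalMin_sub (hux'.differentiableAt two_ne_zero)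
    (hUx.differentiableAt two_ne_zero) hmin
  have hlap := mul_le_mul_of_nonneg_left (lap_le_lap_of_isLocalMin_sub hux' hUx hmin) hδ
  have hradial := gradient_eq_neg_norm_smul_of_radially_antitone (hUmono tc htc)
    (norm_pos_iff.1 (one_pos.trans hxc)) (hUx.differentiableAt two_ne_zero)
  have hvV : ∀ y, u tc y ^ (m - 1) ≤ U tc y ^ (m - 1) := fun y =>
    Real.rpow_le_rpow (hunn tc y) (htouch tc y htc le_rfl) (by linarith)
  have hnonlocal := inner_fracGrad0_add_mul_fracLap_le hradial (norm_nonneg _)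
    (hUnn tc xc htc) hγle hvV (by rw [hcontact]) (huG tc htc.le xc) hVG (huL tc htc.le xc) hVL
  refine ⟨?_, mul_nonneg (norm_nonneg _)
    (sub_nonneg.2 (IoutPlus0_mono γ hvV (huG tc htc.le xc) hVG))⟩
  rw [hueq tc htc xc, hgrad, hcontact] at hdt
  linarith

/-- Contact analysis lemma (Lemma 3.1), case `α ∈ (0,1)`: if the radially symmetric,
radially non-increasing barrier `U` touches the solution `u` of the viscous approximation
from above at `(t_c,x_c)` with `‖x_c‖ > 1`, then at the contact point
`∂_t U ≤ ∇U·G₀(V) + U L(V) + δ ΔU + e` with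
`e = ‖∇U‖ (I⁺_out(V) − I⁺_out(v)) ≥ 0`, where `v = u^{m−1}`, `V = U^{m−1}` and `γ > 0`
satisfies `γ ‖∇U(t_c,x_c)‖ ≤ U(t_c,x_c)`. -/
theorem contact_analysis_alpha_lt_one
    (d : ℕ) (hd : 1 ≤ d) (α m δ : ℝ) (hα0 : 0 < α) (hα1 : α < 1) (hm : 1 < m)
    (hδ : 0 ≤ δ)
    (u : ℝ → EuclideanSpace ℝ (Fin d) → ℝ)
    (hunn : ∀ t x, 0 ≤ u t x) (hub : ∃ M, ∀ t x, u t x ≤ M)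
    (hut : ∀ x, ContDiffOn ℝ 1 (fun t => u t x) (Set.Ici 0))
    (hux : ∀ t : ℝ, 0 ≤ t → ContDiff ℝ 2 (u t))
    (huG : ∀ t : ℝ, 0 ≤ t → ∀ x, Integrable (fun z : EuclideanSpace ℝ (Fin d) =>
      (u t (x + z) ^ (m - 1) * ‖z‖ ^ (-((d : ℝ) + α))) • z))
    (huL : ∀ t : ℝ, 0 ≤ t → ∀ x, Integrable (fun z : EuclideanSpace ℝ (Fin d) =>
      (u t (x + z) ^ (m - 1) + u t (x - z) ^ (m - 1) - 2 * u t x ^ (m - 1))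
        * ‖z‖ ^ (-((d : ℝ) + α))))
    (hueq : ∀ t : ℝ, 0 < t → ∀ x,
      deriv (fun s => u s x) t
        = (inner ℝ (gradient (u t) x) (fracGrad0 d α (fun y => u t y ^ (m - 1)) x) : ℝ)
          + u t x * fracLap d α (fun y => u t y ^ (m - 1)) x
          + δ * lap d (u t) x)
    (U : ℝ → EuclideanSpace ℝ (Fin d) → ℝ)
    (hUnn : ∀ t x, 0 < t → 0 ≤ U t x)
    (hUrad : ∀ t : ℝ, 0 < t → ∀ x y : EuclideanSpace ℝ (Fin d),
      ‖x‖ = ‖y‖ → U t x = U t y)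
    (hUmono : ∀ t : ℝ, 0 < t → ∀ x y : EuclideanSpace ℝ (Fin d),
      ‖x‖ ≤ ‖y‖ → U t y ≤ U t x)
    (hUC2 : ContDiffOn ℝ 2 (fun p : ℝ × EuclideanSpace ℝ (Fin d) => U p.1 p.2)
      (Set.Ioi (0 : ℝ) ×ˢ {x : EuclideanSpace ℝ (Fin d) | 1 < ‖x‖}))
    (tc : ℝ) (htc : 0 < tc) (xc : EuclideanSpace ℝ (Fin d)) (hxc : 1 < ‖xc‖)
    (hVG : Integrable (fun z : EuclideanSpace ℝ (Fin d) =>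
      (U tc (xc + z) ^ (m - 1) * ‖z‖ ^ (-((d : ℝ) + α))) • z))
    (hVL : Integrable (fun z : EuclideanSpace ℝ (Fin d) =>
      (U tc (xc + z) ^ (m - 1) + U tc (xc - z) ^ (m - 1) - 2 * U tc xc ^ (m - 1))
        * ‖z‖ ^ (-((d : ℝ) + α))))
    (htouch : ∀ t x, 0 < t → t ≤ tc → u t x ≤ U t x)
    (hcontact : u tc xc = U tc xc)
    (γ : ℝ) (hγ : 0 < γ) (hγle : γ * ‖gradient (U tc) xc‖ ≤ U tc xc) :
    deriv (fun s => U s xc) tc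
      ≤ (inner ℝ (gradient (U tc) xc)
            (fracGrad0 d α (fun y => U tc y ^ (m - 1)) xc) : ℝ)
        + U tc xc * fracLap d α (fun y => U tc y ^ (m - 1)) xc
        + δ * lap d (U tc) xc
        + ‖gradient (U tc) xc‖
          * (IoutPlus0 d α γ xc (fun y => U tc y ^ (m - 1))
             - IoutPlus0 d α γ xc (fun y => u tc y ^ (m - 1))) ∧
    0 ≤ ‖gradient (U tc) xc‖
          * (IoutPlus0 d α γ xc (fun y => U tc y ^ (m - 1))
             - IoutPlus0 d α γ xc (fun y => u tc y ^ (m - 1))) :=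
  contact_analysis_alpha_lt_one_general d α m δ hm hδ u hunn hut hux huG huL hueq U hUnn hUmono hUC2
    tc htc xc hxc hVG hVL htouch hcontact γ hγle
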